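/- The graph 3K_4^+ (3K_4 plus one extra parallel edge between some fixed pair of vertices) is strongly Z_7-connected: every Z_7-boundary is achieved by some orientation. -/

import Mathlib

/-- The direction of edge `i` under orientation `o`: if `o i = true` the
reference direction is reversed. -/
def edir {V : Type} {m : ℕ} (ends : Fin m → V × V) (o : Fin m → Bool) (i : Fin m) : V × V :=
  if o i then ((ends i).2, (ends i).1) else ends i

/-- Contribution of edge `i` to `d⁺ - d⁻` at vertex `v`, computed in `ZMod n`. -/
def contrib {V : Type} [DecidableEq V] {m : ℕ} (n : ℕ) (ends : Fin m → V × V)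
    (o : Fin m → Bool) (i : Fin m) (v : V) : ZMod n :=
  (if (edir ends o i).1 = v then 1 else 0) - (if (edir ends o i).2 = v then 1 else 0)

/-- `d⁺_D(v) - d⁻_D(v)` in `ZMod n` for the orientation `o` of the multigraph
with edge-endpoint function `ends`. -/
def netDeg {V : Type} [DecidableEq V] {m : ℕ} (n : ℕ) (ends : Fin m → V × V)
    (o : Fin m → Bool) (v : V) : ZMod n :=
  ∑ i : Fin m, contrib n ends o i v

def threeK4plus : Fin 19 → Fin 4 × Fin 4 :=
  ![(0, 1), (0, 1), (0, 1), (0, 2), (0, 2), (0, 2), (0, 3), (0, 3), (0, 3),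
    (1, 2), (1, 2), (1, 2), (1, 3), (1, 3), (1, 3),
    (2, 3), (2, 3), (2, 3), (2, 3)]

/-!
Reversing `r` of the `k` parallel edges between `u` and `w` (all initially directed `u → w`)
adds `k - 2r` to the net outdegree of `u` and subtracts it at `w`. Hence each triple bundle of
`3K₄⁺` carries a value in `{±1, ±3}` and the quadruple bundle a value in `{0, ±2, ±4}`.
Prescribing the boundary at three vertices gives three linear conditions on the six bundle
values (the fourth vertex follows from `∑ β = 0`), and a finite search in `ZMod 7` shows that
they can always be met.
-/

def boolSign {R : Type} [Ring R] (b : Bool) : R := if b then -1 else 1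

def signSum {R : Type} [Ring R] {k : ℕ} (p : Fin k → Bool) : R := ∑ j, boolSign (p j)

def reverseFirst (k r : ℕ) (j : Fin k) : Bool := decide (j.val < r)

lemma signSum_reverseFirst {R : Type} [Ring R] {k r : ℕ} (hr : r ≤ k) :
    signSum (reverseFirst k r) = (k : R) - 2 * r := by
  obtain ⟨s, rfl⟩ := Nat.exists_eq_add_of_le hr
  simp only [signSum, reverseFirst]
  rw [Fin.sum_univ_eq_sum_range (fun j => boolSign (decide (j < r))), Finset.sum_range_add]
  have hreversed : ∀ j ∈ Finset.range r, boolSign (R := R) (decide (j < r)) = -1 := by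
    intro j hj
    simp [boolSign, Finset.mem_range.mp hj]
  rw [Finset.sum_congr rfl hreversed]
  simp only [Finset.sum_const, Finset.card_range, nsmul_eq_mul, boolSign, add_lt_iff_neg_left,
    not_lt_zero, decide_false, Bool.false_eq_true, if_false, mul_one, mul_neg]
  rw [Nat.cast_add, two_mul]
  abel

lemma contrib_eq_boolSign_mul {V : Type} [DecidableEq V] {m : ℕ} (n : ℕ) (ends : Fin m → V × V)
    (o : Fin m → Bool) (i : Fin m) (v : V) :
    contrib n ends o i v =
      boolSign (o i) * ((if (ends i).1 = v then 1 else 0) - (if (ends i).2 = v then 1 else 0)) := by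
  unfold contrib edir boolSign
  cases o i <;> simp

def orientByBundles (p₀₁ p₀₂ p₀₃ p₁₂ p₁₃ : Fin 3 → Bool) (p₂₃ : Fin 4 → Bool) : Fin 19 → Bool :=
  ![p₀₁ 0, p₀₁ 1, p₀₁ 2, p₀₂ 0, p₀₂ 1, p₀₂ 2, p₀₃ 0, p₀₃ 1, p₀₃ 2,
    p₁₂ 0, p₁₂ 1, p₁₂ 2, p₁₃ 0, p₁₃ 1, p₁₃ 2, p₂₃ 0, p₂₃ 1, p₂₃ 2, p₂₃ 3]

lemma netDeg_orientByBundles (p₀₁ p₀₂ p₀₃ p₁₂ p₁₃ : Fin 3 → Bool) (p₂₃ : Fin 4 → Bool) :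
    let o := orientByBundles p₀₁ p₀₂ p₀₃ p₁₂ p₁₃ p₂₃
    netDeg 7 threeK4plus o 0 = signSum p₀₁ + signSum p₀₂ + signSum p₀₃ ∧
    netDeg 7 threeK4plus o 1 = -signSum p₀₁ + signSum p₁₂ + signSum p₁₃ ∧
    netDeg 7 threeK4plus o 2 = -signSum p₀₂ - signSum p₁₂ + signSum p₂₃ ∧
    netDeg 7 threeK4plus o 3 = -signSum p₀₃ - signSum p₁₃ - signSum p₂₃ := by
  simp only [netDeg, signSum, contrib_eq_boolSign_mul, Fin.sum_univ_succ, Fin.sum_univ_zero]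
  refine ⟨?_, ?_, ?_, ?_⟩ <;>
    simp only [orientByBundles, threeK4plus, Fin.succ, Fin.isValue, Fin.mk_one, Fin.reduceFinMk,
      Fin.coe_ofNat_eq_mod, Nat.reduceAdd, Nat.zero_mod, Nat.one_mod, Nat.reduceMod, Nat.mod_succ,
      Matrix.cons_val_zero, Matrix.cons_val_one, Matrix.cons_val, Fin.reduceEq, one_ne_zero,
      zero_ne_one, ↓reduceIte] <;>
    ring

/- `r₀₃`, `r₁₃` and `r₂₃` each occur in only one condition, so nesting their quantifiers keeps
the `decide` search at `4³ · (4 + 4 + 5)` candidates per target. -/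
lemma exists_bundle_reversals (t₀ t₁ t₂ : ZMod 7) : ∃ r₀₁ r₀₂ r₁₂ : Fin 4,
    (∃ r₀₃ : Fin 4, (3 - 2 * r₀₁.val) + (3 - 2 * r₀₂.val) + (3 - 2 * r₀₃.val) = t₀) ∧
    (∃ r₁₃ : Fin 4, -(3 - 2 * r₀₁.val) + (3 - 2 * r₁₂.val) + (3 - 2 * r₁₃.val) = t₁) ∧
    (∃ r₂₃ : Fin 5, -(3 - 2 * r₀₂.val) - (3 - 2 * r₁₂.val) + (4 - 2 * r₂₃.val) = t₂) := by
  revert t₀ t₁ t₂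
  decide

theorem threeK4plus_strongly_Z7_connected (β : Fin 4 → ZMod 7) (hβ : ∑ v : Fin 4, β v = 0) :
    ∃ o : Fin 19 → Bool, ∀ v : Fin 4, netDeg 7 threeK4plus o v = β v := by
  obtain ⟨r₀₁, r₀₂, r₁₂, ⟨r₀₃, h₀⟩, ⟨r₁₃, h₁⟩, ⟨r₂₃, h₂⟩⟩ :=
    exists_bundle_reversals (β 0) (β 1) (β 2)
  have hsignSum : ∀ {k : ℕ} (r : Fin (k + 1)),
      signSum (reverseFirst k r) = ((k : ℕ) : ZMod 7) - 2 * r.val :=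
    fun r => signSum_reverseFirst (Nat.lt_succ_iff.mp r.isLt)
  obtain ⟨n₀, n₁, n₂, n₃⟩ := netDeg_orientByBundles (reverseFirst 3 r₀₁) (reverseFirst 3 r₀₂)
    (reverseFirst 3 r₀₃) (reverseFirst 3 r₁₂) (reverseFirst 3 r₁₃) (reverseFirst 4 r₂₃)
  simp only [hsignSum, Nat.cast_ofNat] at n₀ n₁ n₂ n₃
  rw [Fin.sum_univ_four] at hβ
  exact ⟨_, fun v => by
    fin_cases v
    exacts [n₀.trans h₀, n₁.trans h₁, n₂.trans h₂,
      n₃.trans (by show _ = β 3; linear_combination -hβ - h₀ - h₁ - h₂)]⟩
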